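/- Let σ assign monotonically to each closed subset of a second countable space E a sub-σ-field of M, and let A_ω be a stopping set (i.e., {A_ω ⊆ A} ∈ σ(A) for all closed A). With the discretization A_ω^n(ω) := (A_ω(ω))^n built from a countable open basis, each A_ω^n is a stopping set taking countably many closed values. -/
import Mathlib


open MeasureTheory

/-- The discretization `F^n` of a closed set built from a countable open basis. -/
def discretize {E : Type*} (U : ℕ → Set E) (n : ℕ) (F : Set E) : Set E :=
  ⋂ i ∈ {i : ℕ | i ≤ n ∧ F ⊆ (U i)ᶜ}, (U i)ᶜ

/-- If `A_ω` is a stopping set, then each discretization `A_ω^n` is a stopping set whose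
values are closed sets and which takes at most countably many values. -/
theorem stmt_11 {E : Type*} [TopologicalSpace E] {Ω : Type*} [M : MeasurableSpace Ω]
    (U : ℕ → Set E) (hU : TopologicalSpace.IsTopologicalBasis (Set.range U))
    (σ : Set E → MeasurableSpace Ω)
    (hmono : ∀ A B : Set E, IsClosed A → IsClosed B → A ⊆ B → σ A ≤ σ B)
    (Aω : Ω → Set E) (hcl : ∀ ω, IsClosed (Aω ω))
    (hstop : ∀ A : Set E, IsClosed A → MeasurableSet[σ A] {ω | Aω ω ⊆ A}) (n : ℕ) :
    (∀ ω, IsClosed (discretize U n (Aω ω))) ∧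
    (∀ A : Set E, IsClosed A → MeasurableSet[σ A] {ω | discretize U n (Aω ω) ⊆ A}) ∧
    (Set.range fun ω => discretize U n (Aω ω)).Countable := by
  classical
  have hUopen : ∀ i, IsOpen (U i) := fun i => hU.isOpen ⟨i, rfl⟩
  have hCcl : ∀ S : Finset ℕ, IsClosed (⋂ i ∈ S, (U i)ᶜ) := fun S =>
    isClosed_biInter fun i _ => (hUopen i).isClosed_compl
  -- the discretization equals the intersection over a finset
  have hrepr : ∀ ω, discretize U n (Aω ω) =
      ⋂ i ∈ ((Finset.range (n+1)).filter fun i => Aω ω ⊆ (U i)ᶜ), (U i)ᶜ := by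
    intro ω
    ext x
    simp [discretize, Nat.lt_succ_iff]
  have hclosed : ∀ ω, IsClosed (discretize U n (Aω ω)) := by
    intro ω
    rw [hrepr ω]
    exact hCcl _
  refine ⟨hclosed, ?_, ?_⟩
  · intro A hA
    have key : {ω | discretize U n (Aω ω) ⊆ A} =
        ⋃ S : Finset ℕ,
          if (S ⊆ Finset.range (n+1) ∧ (⋂ i ∈ S, (U i)ᶜ) ⊆ A)
          then {ω | Aω ω ⊆ ⋂ i ∈ S, (U i)ᶜ} else ∅ := by
      ext ω
      simp only [Set.mem_setOf_eq, Set.mem_iUnion]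
      constructor
      · intro h
        refine ⟨(Finset.range (n+1)).filter fun i => Aω ω ⊆ (U i)ᶜ, ?_⟩
        rw [if_pos]
        · simp only [Set.mem_setOf_eq, Set.subset_iInter_iff]
          intro i hi
          simp only [Finset.mem_filter] at hi
          exact hi.2
        · refine ⟨Finset.filter_subset _ _, ?_⟩
          rw [← hrepr ω]
          exact h
      · rintro ⟨S, hS⟩
        split_ifs at hS with hc
        · simp only [Set.mem_setOf_eq] at hS
          refine subset_trans ?_ hc.2
          intro x hx
          simp only [Set.mem_iInter]
          intro i hi
          have hin : i ≤ n ∧ Aω ω ⊆ (U i)ᶜ := by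
            refine ⟨Nat.lt_succ_iff.mp (Finset.mem_range.mp (hc.1 hi)), ?_⟩
            exact hS.trans (Set.biInter_subset_of_mem hi)
          simp only [discretize, Set.mem_iInter, Set.mem_setOf_eq] at hx
          exact hx i hin
        · exact absurd hS (Set.notMem_empty ω)
    rw [key]
    refine @MeasurableSet.iUnion Ω (Finset ℕ) (σ A) _ _ fun S => ?_
    split_ifs with hc
    · exact (hmono _ _ (hCcl S) hA hc.2) _ (hstop _ (hCcl S))
    · exact @MeasurableSet.empty Ω (σ A)
  · have : (Set.range fun ω => discretize U n (Aω ω)) ⊆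
        Set.range fun S : Finset ℕ => ⋂ i ∈ S, (U i)ᶜ := by
      rintro _ ⟨ω, rfl⟩
      exact ⟨_, (hrepr ω).symm⟩
    exact (Set.countable_range _).mono this
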